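/- arXiv:1801.02030 — 3 statements merged into one kernel-verified Lean document; each statement's English description precedes it below -/
import Mathlib

section
/- Let A, B be positive invertible operators on a complex Hilbert space and let m, m', M, M' be positive reals satisfying either 0 < m ≤ B ≤ m' < M' ≤ A ≤ M or 0 < m ≤ A ≤ m' < M' ≤ B ≤ M. Then for every ν ∈ [0,1], with r = min{ν, 1−ν}, r₁ = min{2r, 1−2r}, h = M/m and h' = M'/m', one has the operator inequality 2r(A⁻¹ ∇ B⁻¹ − A⁻¹ ♯ B⁻¹) + K(√h')^{r₁} (A⁻¹ ♯_ν B⁻¹) ≤ A⁻¹ ∇_ν B⁻¹. -/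
open ContinuousLinearMap

open scoped NNReal

noncomputable section

variable {H : Type*} [NormedAddCommGroup H] [InnerProductSpace ℂ H] [CompleteSpace H]

/-- The ν-weighted arithmetic mean `A ∇_ν B = (1 - ν) A + ν B`. -/
def amean (ν : ℝ) (A B : H →L[ℂ] H) : H →L[ℂ] H := (1 - ν) • A + ν • B

/-- The ν-weighted geometric mean `A ♯_ν B = A^{1/2} (A^{-1/2} B A^{-1/2})^ν A^{1/2}`,
with operator powers given by the continuous functional calculus. -/
def gmean (ν : ℝ) (A B : H →L[ℂ] H) : H →L[ℂ] H :=
  A ^ ((1 : ℝ)/2) * (A ^ (-((1 : ℝ)/2)) * B * A ^ (-((1 : ℝ)/2))) ^ ν * A ^ ((1 : ℝ)/2)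

/-- The Kantorovich constant `K(t) = (t+1)^2 / (4t)`. -/
def Kc (t : ℝ) : ℝ := (t + 1) ^ 2 / (4 * t)

lemma Kc_pos {t : ℝ} (ht : 0 < t) : 0 < Kc t := by
  have : 0 < t + 1 := by linarith
  unfold Kc; positivity

lemma Kc_inv {t : ℝ} (ht : 0 < t) : Kc t⁻¹ = Kc t := by
  unfold Kc; rw [div_eq_div_iff (by positivity) (by positivity)]; field_simp; ring

lemma Kc_mono {s t : ℝ} (hs : 1 ≤ s) (hst : s ≤ t) : Kc s ≤ Kc t := by
  unfold Kc
  rw [div_le_div_iff₀ (by nlinarith) (by nlinarith)]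
  nlinarith [mul_nonneg (sub_nonneg.2 hst) (by nlinarith : (0:ℝ) ≤ s*t - 1)]

lemma core_half {t μ : ℝ} (ht : 0 < t) (hμ0 : 0 ≤ μ) (hμ1 : μ ≤ 1/2) :
    Kc t ^ min μ (1 - μ) * t ^ μ ≤ (1 - μ) + μ * t := by
  have hmin : min μ (1 - μ) = μ := min_eq_left (by linarith)
  rw [hmin, ← Real.mul_rpow (Kc_pos ht).le ht.le]
  have h1 : Kc t * t = ((t+1)/2)^2 := by unfold Kc; field_simp; ring
  rw [h1, ← Real.rpow_natCast (((t+1)/2)) 2, ← Real.rpow_mul (by positivity)]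
  have h2 := Real.geom_mean_le_arith_mean2_weighted (by linarith : (0:ℝ) ≤ 2*μ)
    (by linarith : (0:ℝ) ≤ 1 - 2*μ) (by positivity : (0:ℝ) ≤ (t+1)/2) zero_le_one
    (by ring)
  rw [Real.one_rpow, mul_one] at h2
  calc ((t+1)/2) ^ ((2:ℕ) * μ) = ((t+1)/2) ^ (2*μ) := by norm_num
    _ ≤ 2*μ * ((t+1)/2) + (1 - 2*μ) * 1 := h2
    _ = (1 - μ) + μ * t := by ring

lemma core {t μ : ℝ} (ht : 0 < t) (hμ0 : 0 ≤ μ) (hμ1 : μ ≤ 1) :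
    Kc t ^ min μ (1 - μ) * t ^ μ ≤ (1 - μ) + μ * t := by
  rcases le_total μ (1/2) with hμ | hμ
  · exact core_half ht hμ0 hμ
  · have h := core_half (t := t⁻¹) (μ := 1 - μ) (by positivity) (by linarith) (by linarith)
    rw [Kc_inv ht, show (1 - (1-μ)) = μ by ring, min_comm,
        show t⁻¹ = t^(-1:ℝ) by rw [Real.rpow_neg_one], ← Real.rpow_mul ht.le] at h
    have h' := mul_le_mul_of_nonneg_right h ht.le
    have e1 : t ^ ((-1)*(1-μ)) * t = t ^ μ := by
      nth_rewrite 2 [← Real.rpow_one t]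
      rw [← Real.rpow_add ht]; ring_nf
    have e2 : (μ + (1-μ) * t^(-1:ℝ)) * t = μ*t + (1-μ) := by
      rw [Real.rpow_neg_one]; field_simp
    rw [e2, mul_assoc, e1] at h'
    linarith

lemma scalar_main {x ν : ℝ} (hx : 0 < x) (hν0 : 0 ≤ ν) (hν1 : ν ≤ 1) :
    2 * min ν (1-ν) * ((1 + x)/2 - Real.sqrt x)
      + Kc (Real.sqrt x) ^ (min (2 * min ν (1-ν)) (1 - 2 * min ν (1-ν))) * x ^ ν
      ≤ (1 - ν) + ν * x := by
  set t := Real.sqrt x with htdef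
  have ht : 0 < t := Real.sqrt_pos.mpr hx
  have htt : t * t = x := Real.mul_self_sqrt hx.le
  have hxν : x ^ ν = t ^ (2*ν) := by
    rw [htdef, Real.sqrt_eq_rpow, ← Real.rpow_mul hx.le]; ring_nf
  rcases le_total ν (1/2) with hc | hc
  · have hmin : min ν (1-ν) = ν := min_eq_left (by linarith)
    have h := core ht (by linarith : (0:ℝ) ≤ 2*ν) (by linarith)
    rw [show (1 - 2*ν) = 1 - 2*ν by ring] at h
    rw [hmin, hxν]
    have : min (2*ν) (1 - 2*ν) = min (2*ν) (1-(2*ν)) := by norm_num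
    nlinarith [h]
  · have hmin : min ν (1-ν) = 1-ν := min_eq_right (by linarith)
    have h := core ht (by linarith : (0:ℝ) ≤ 2*ν-1) (by linarith)
    have h' := mul_le_mul_of_nonneg_right h ht.le
    have hexp : t ^ (2*ν-1) * t = t ^ (2*ν) := by
      nth_rewrite 2 [← Real.rpow_one t]
      rw [← Real.rpow_add ht]; ring_nf
    have hmm : min (2*(1-ν)) (1 - 2*(1-ν)) = min (2*ν-1) (1-(2*ν-1)) := by
      rw [min_comm]; congr 1 <;> ring
    rw [mul_assoc, hexp] at h'
    have h'' : Kc t ^ ((2*ν-1) ⊓ (1-(2*ν-1))) * t ^ (2*ν) ≤ (2-2*ν)*t + (2*ν-1)*x := by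
      nlinarith [h', htt]
    rw [hmin, hxν, hmm]
    linarith

set_option maxHeartbeats 2000000 in
set_option synthInstance.maxHeartbeats 1000000 in
lemma key (a b : H →L[ℂ] H) (ha : IsUnit a) (ha0 : 0 ≤ a) (hb0 : 0 ≤ b)
    (ν r r₁ c lo : ℝ) (hν0 : 0 ≤ ν) (hν1 : ν ≤ 1) (hr : r = min ν (1 - ν))
    (hr₁ : r₁ = min (2 * r) (1 - 2 * r)) (hc0 : 0 ≤ c) (hlo : 0 < lo)
    (hXlo : lo • (1 : H →L[ℂ] H) ≤ a ^ (-((1:ℝ)/2)) * b * a ^ (-((1:ℝ)/2)))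
    (hc : ∀ x ∈ spectrum ℝ (a ^ (-((1:ℝ)/2)) * b * a ^ (-((1:ℝ)/2))),
      c ≤ Kc (Real.sqrt x) ^ r₁) :
    (2 * r) • (amean (1/2) a b - gmean (1/2) a b) + c • gmean ν a b ≤ amean ν a b := by
  set T := a ^ (-((1:ℝ)/2)) with hTdef
  set S := a ^ ((1:ℝ)/2) with hSdef
  set X := T * b * T with hXdef
  have h0a : (0:ℝ≥0) ∉ spectrum ℝ≥0 a := spectrum.zero_notMem_iff ℝ≥0 |>.mpr ha
  have hS0 : 0 ≤ S := CFC.rpow_nonneg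
  have hT0 : 0 ≤ T := CFC.rpow_nonneg
  have hSsa : IsSelfAdjoint S := .of_nonneg hS0
  have hTsa : IsSelfAdjoint T := .of_nonneg hT0
  have hST : S * T = 1 := CFC.rpow_mul_rpow_neg _ (IsStrictlyPositive.iff_of_unital.mpr ⟨ha0, ha⟩)
  have hTS : T * S = 1 := CFC.rpow_neg_mul_rpow _ (IsStrictlyPositive.iff_of_unital.mpr ⟨ha0, ha⟩)
  have hX0 : 0 ≤ X := by
    have h := star_left_conjugate_nonneg hb0 T
    rwa [hTsa.star_eq] at h
  have hXsa : IsSelfAdjoint X := .of_nonneg hX0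
  have hspec : ∀ x ∈ spectrum ℝ X, 0 < x := by
    intro x hx
    have h1 : algebraMap ℝ (H →L[ℂ] H) lo ≤ X := by
      rwa [Algebra.algebraMap_eq_smul_one]
    exact lt_of_lt_of_le hlo ((algebraMap_le_iff_le_spectrum hXsa).mp h1 x hx)
  -- identities
  have hSXS : S * X * S = b := by
    rw [hXdef]
    simp only [← mul_assoc]
    rw [hST, one_mul, mul_assoc, hTS, mul_one]
  have hSS : S * S = a := by
    rw [hSdef, ← CFC.rpow_add ha]
    norm_num
    exact CFC.rpow_one a
  have hamean : ∀ w : ℝ, amean w a b = S * ((1 - w) • (1:H →L[ℂ] H) + w • X) * S := by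
    intro w
    rw [amean, mul_add, add_mul, mul_smul_comm, mul_smul_comm, smul_mul_assoc, smul_mul_assoc,
      mul_one, hSS, hSXS]
  have hgmean : ∀ w : ℝ, gmean w a b = S * X ^ w * S := fun w => rfl
  -- cfc representations
  have hcont2 : ContinuousOn (fun x : ℝ => x ^ ν) (spectrum ℝ X) := fun x hx =>
    (Real.continuousAt_rpow_const x ν (.inl (hspec x hx).ne')).continuousWithinAt
  have hpow : ∀ w : ℝ, ContinuousOn (fun x : ℝ => x ^ w) (spectrum ℝ X) → X ^ w = cfc (fun x : ℝ => x ^ w) X := by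
    intro w hw
    rw [CFC.rpow_def, cfc_nnreal_eq_real _ X hX0]
    refine cfc_congr fun x hx => ?_
    have hx0 : 0 < x := hspec x hx
    rw [NNReal.coe_rpow, Real.coe_toNNReal _ hx0.le]
  have hν' : X ^ ν = cfc (fun x : ℝ => x ^ ν) X := hpow ν hcont2
  have hhalf : X ^ ((1:ℝ)/2) = cfc (fun x : ℝ => Real.sqrt x) X := by
    rw [hpow ((1:ℝ)/2) (fun x hx =>
      (Real.continuousAt_rpow_const x _ (.inl (hspec x hx).ne')).continuousWithinAt)]
    exact cfc_congr fun x hx => (Real.sqrt_eq_rpow x).symm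
  have eP : ∀ w : ℝ, cfc (fun x : ℝ => (1 - w) + w * x) X = (1 - w) • (1:H →L[ℂ] H) + w • X := by
    intro w
    rw [cfc_add X (fun _ : ℝ => 1 - w) (fun x : ℝ => w * x) (by fun_prop) (by fun_prop),
      cfc_const (1 - w) X (ha := hXsa), cfc_const_mul_id w X (ha := hXsa), Algebra.algebraMap_eq_smul_one]
  have eQ : cfc (fun x : ℝ => 2*r*((1 - (1/2:ℝ)) + (1/2)*x - Real.sqrt x) + c * x ^ ν) X
      = (2*r) • (((1 - (1/2:ℝ)) • (1:H →L[ℂ] H) + (1/2:ℝ) • X) - X ^ ((1:ℝ)/2)) + c • X ^ ν := by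
    rw [cfc_add X (fun x : ℝ => 2*r*((1 - (1/2:ℝ)) + (1/2)*x - Real.sqrt x))
        (fun x : ℝ => c * x ^ ν)
        (by exact (continuousOn_const.add (continuousOn_const.mul continuousOn_id)
          |>.sub Real.continuous_sqrt.continuousOn).const_smul (2*r))
        (hcont2.const_smul c)]
    rw [cfc_const_mul (2*r) (fun x : ℝ => (1 - (1/2:ℝ)) + (1/2)*x - Real.sqrt x) X
        (by exact (continuousOn_const.add (continuousOn_const.mul continuousOn_id)
          |>.sub Real.continuous_sqrt.continuousOn))]
    rw [cfc_const_mul c (fun x : ℝ => x ^ ν) X hcont2]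
    rw [cfc_sub (fun x : ℝ => (1 - (1/2:ℝ)) + (1/2)*x) Real.sqrt X
        (hf := by fun_prop) (hg := Real.continuous_sqrt.continuousOn)]
    rw [eP (1/2), ← hhalf, ← hν']
  have inner : (2*r) • (((1 - (1/2:ℝ)) • (1:H →L[ℂ] H) + (1/2:ℝ) • X) - X ^ ((1:ℝ)/2)) + c • X ^ ν
      ≤ (1 - ν) • (1:H →L[ℂ] H) + ν • X := by
    rw [← eP ν, ← eQ]
    refine cfc_mono fun x hx => ?_
    have hx0 := hspec x hx
    have hs := scalar_main hx0 hν0 hν1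
    rw [← hr, ← hr₁] at hs
    have h2 : c * x ^ ν ≤ Kc (Real.sqrt x) ^ r₁ * x ^ ν :=
      mul_le_mul_of_nonneg_right (hc x hx) (Real.rpow_nonneg hx0.le ν)
    have e : (1 - (1/2:ℝ)) + (1/2)*x = (1+x)/2 := by ring
    rw [e]
    linarith
  have hconj := hSsa.conjugate_le_conjugate inner
  calc (2 * r) • (amean (1/2) a b - gmean (1/2) a b) + c • gmean ν a b
      = S * ((2*r) • (((1 - (1/2:ℝ)) • (1:H →L[ℂ] H) + (1/2:ℝ) • X) - X ^ ((1:ℝ)/2)) + c • X ^ ν) * S := by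
        rw [hamean (1/2), hgmean (1/2), hgmean ν]
        simp only [mul_sub, sub_mul, mul_add, add_mul, mul_smul_comm, smul_mul_assoc]
    _ ≤ S * ((1 - ν) • (1:H →L[ℂ] H) + ν • X) * S := hconj
    _ = amean ν a b := (hamean ν).symm

def mkUnit (α : ℝ) (hα : 0 < α) : (H →L[ℂ] H)ˣ :=
  ⟨α • 1, α⁻¹ • 1, by
    rw [smul_mul_smul_comm, one_mul, mul_inv_cancel₀ hα.ne', one_smul], by
    rw [smul_mul_smul_comm, one_mul, inv_mul_cancel₀ hα.ne', one_smul]⟩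

set_option maxHeartbeats 1000000 in
set_option synthInstance.maxHeartbeats 1000000 in
lemma key' (A B : H →L[ℂ] H) (αA βA αB βB : ℝ)
    (hαA : 0 < αA) (hβA : 0 < βA) (hαB : 0 < αB) (hβB : 0 < βB)
    (hA1 : αA • (1 : H →L[ℂ] H) ≤ A) (hA2 : A ≤ βA • (1 : H →L[ℂ] H))
    (hB1 : αB • (1 : H →L[ℂ] H) ≤ B) (hB2 : B ≤ βB • (1 : H →L[ℂ] H))
    (ν r r₁ c : ℝ) (hν0 : 0 ≤ ν) (hν1 : ν ≤ 1) (hr : r = min ν (1 - ν))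
    (hr₁ : r₁ = min (2 * r) (1 - 2 * r)) (hc0 : 0 ≤ c)
    (hc : ∀ x : ℝ, αA/βB ≤ x → x ≤ βA/αB → c ≤ Kc (Real.sqrt x) ^ r₁) :
    (2 * r) • (amean (1/2) (Ring.inverse A) (Ring.inverse B)
        - gmean (1/2) (Ring.inverse A) (Ring.inverse B))
      + c • gmean ν (Ring.inverse A) (Ring.inverse B)
      ≤ amean ν (Ring.inverse A) (Ring.inverse B) := by
  have hA0 : 0 ≤ A := le_trans (smul_nonneg hαA.le zero_le_one) hA1
  have hB0 : 0 ≤ B := le_trans (smul_nonneg hαB.le zero_le_one) hB1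
  have hAu : IsUnit A := CStarAlgebra.isUnit_of_le _ hA1
    (IsStrictlyPositive.iff_of_unital.mpr ⟨smul_nonneg hαA.le zero_le_one, (mkUnit αA hαA).isUnit⟩)
  have hBu : IsUnit B := CStarAlgebra.isUnit_of_le _ hB1
    (IsStrictlyPositive.iff_of_unital.mpr ⟨smul_nonneg hαB.le zero_le_one, (mkUnit αB hαB).isUnit⟩)
  set a := Ring.inverse A with hadef
  set b := Ring.inverse B with hbdef
  have hai : a = ↑hAu.unit⁻¹ := by
    rw [hadef]; conv_lhs => rw [← hAu.unit_spec, Ring.inverse_unit]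
  have hbi : b = ↑hBu.unit⁻¹ := by
    rw [hbdef]; conv_lhs => rw [← hBu.unit_spec, Ring.inverse_unit]
  have ha0 : 0 ≤ a := by
    rw [hai]; exact CFC.inv_nonneg_of_nonneg hAu.unit (by rwa [hAu.unit_spec])
  have hb0 : 0 ≤ b := by
    rw [hbi]; exact CFC.inv_nonneg_of_nonneg hBu.unit (by rwa [hBu.unit_spec])
  have haU : IsUnit a := by rw [hai]; exact (hAu.unit⁻¹).isUnit
  -- bounds for b
  have hblo : βB⁻¹ • (1 : H →L[ℂ] H) ≤ b := by
    have h := CStarAlgebra.inv_le_inv (a := hBu.unit) (b := mkUnit βB hβB)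
      (by rw [hBu.unit_spec]; exact hB0) (by rw [hBu.unit_spec]; exact hB2)
    rw [← hbi] at h
    exact h
  have hbhi : b ≤ αB⁻¹ • (1 : H →L[ℂ] H) := by
    have h := CStarAlgebra.inv_le_inv (a := mkUnit αB hαB) (b := hBu.unit)
      (smul_nonneg hαB.le zero_le_one) (by rw [hBu.unit_spec]; exact hB1)
    rw [← hbi] at h
    exact h
  -- T facts
  set T := a ^ (-((1:ℝ)/2)) with hTdef
  have h0a : (0:ℝ≥0) ∉ spectrum ℝ≥0 a := spectrum.zero_notMem_iff ℝ≥0 |>.mpr haU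
  have hT0 : 0 ≤ T := CFC.rpow_nonneg
  have hTsa : IsSelfAdjoint T := .of_nonneg hT0
  have hTT : T * T = A := by
    rw [hTdef, ← CFC.rpow_add haU,
      show (-((1:ℝ)/2) + -((1:ℝ)/2)) = (-1:ℝ) by norm_num, hai,
      CFC.rpow_neg_one_eq_inv (hAu.unit⁻¹) (by rw [← hai]; exact ha0), inv_inv,
      hAu.unit_spec]
  set X := T * b * T with hXdef
  have hX0 : 0 ≤ X := by
    have h := star_left_conjugate_nonneg hb0 T
    rwa [hTsa.star_eq] at h
  have hXsa : IsSelfAdjoint X := .of_nonneg hX0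
  have hXlo : (αA/βB) • (1 : H →L[ℂ] H) ≤ X := by
    calc (αA/βB) • (1 : H →L[ℂ] H) = βB⁻¹ • (αA • (1 : H →L[ℂ] H)) := by
          rw [smul_smul, div_eq_inv_mul]
      _ ≤ βB⁻¹ • A := smul_le_smul_of_nonneg_left hA1 (by positivity)
      _ = T * (βB⁻¹ • 1) * T := by rw [mul_smul_comm, mul_one, smul_mul_assoc, hTT]
      _ ≤ T * b * T := hTsa.conjugate_le_conjugate hblo
  have hXhi : X ≤ (βA/αB) • (1 : H →L[ℂ] H) := by
    calc X ≤ T * (αB⁻¹ • 1) * T := hTsa.conjugate_le_conjugate hbhi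
      _ = αB⁻¹ • A := by rw [mul_smul_comm, mul_one, smul_mul_assoc, hTT]
      _ ≤ αB⁻¹ • (βA • (1 : H →L[ℂ] H)) := smul_le_smul_of_nonneg_left hA2 (by positivity)
      _ = (βA/αB) • (1 : H →L[ℂ] H) := by rw [smul_smul, div_eq_inv_mul]
  have hspec : ∀ x ∈ spectrum ℝ X, αA/βB ≤ x ∧ x ≤ βA/αB := by
    intro x hx
    constructor
    · refine (algebraMap_le_iff_le_spectrum (a := X) hXsa).mp ?_ x hx
      rwa [Algebra.algebraMap_eq_smul_one]
    · refine (le_algebraMap_iff_spectrum_le (a := X) hXsa).mp ?_ x hx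
      rwa [Algebra.algebraMap_eq_smul_one]
  exact key a b haU ha0 hb0 ν r r₁ c (αA/βB) hν0 hν1 hr hr₁ hc0
    (by positivity) hXlo (fun x hx => hc x (hspec x hx).1 (hspec x hx).2)

set_option synthInstance.maxHeartbeats 1000000 in
theorem stmt0 (A B : H →L[ℂ] H) (m m' M' M : ℝ) (ν r r₁ h h' : ℝ)
    (hm : 0 < m) (hm' : 0 < m') (hM' : 0 < M') (hM : 0 < M)
    (hcond :
      (m • (1 : H →L[ℂ] H) ≤ B ∧ B ≤ m' • (1 : H →L[ℂ] H) ∧ m' < M' ∧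
        M' • (1 : H →L[ℂ] H) ≤ A ∧ A ≤ M • (1 : H →L[ℂ] H)) ∨
      (m • (1 : H →L[ℂ] H) ≤ A ∧ A ≤ m' • (1 : H →L[ℂ] H) ∧ m' < M' ∧
        M' • (1 : H →L[ℂ] H) ≤ B ∧ B ≤ M • (1 : H →L[ℂ] H)))
    (hν : ν ∈ Set.Icc (0 : ℝ) 1) (hr : r = min ν (1 - ν))
    (hr₁ : r₁ = min (2 * r) (1 - 2 * r)) (hh : h = M / m) (hh' : h' = M' / m') :
    (2 * r) • (amean (1/2) (Ring.inverse A) (Ring.inverse B) - gmean (1/2) (Ring.inverse A) (Ring.inverse B))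
      + (Kc (Real.sqrt h') ^ r₁) • gmean ν (Ring.inverse A) (Ring.inverse B)
      ≤ amean ν (Ring.inverse A) (Ring.inverse B) := by
  obtain ⟨hν0, hν1⟩ := hν
  have hr0 : 0 ≤ r := by rw [hr]; exact le_min hν0 (by linarith)
  have hr₁0 : 0 ≤ r₁ := by
    rw [hr₁]
    have hrh : r ≤ 1/2 := by
      rw [hr]
      rcases le_total ν (1/2) with hc2 | hc2
      · exact le_trans (min_le_left _ _) hc2
      · exact le_trans (min_le_right _ _) (by linarith)
    exact le_min (by linarith) (by linarith)
  have hh'0 : 0 < h' := by rw [hh']; positivity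
  have hsh' : 0 < Real.sqrt h' := Real.sqrt_pos.mpr hh'0
  have hc0 : 0 ≤ Kc (Real.sqrt h') ^ r₁ := Real.rpow_nonneg (Kc_pos hsh').le r₁
  rcases hcond with ⟨hB1, hB2, hm'M', hA1, hA2⟩ | ⟨hA1, hA2, hm'M', hB1, hB2⟩
  · -- m ≤ B ≤ m' < M' ≤ A ≤ M
    have hh'1 : 1 < h' := by rw [hh']; exact (one_lt_div hm').mpr hm'M'
    have h1sh' : 1 ≤ Real.sqrt h' := by
      rw [show (1:ℝ) = Real.sqrt 1 by rw [Real.sqrt_one]]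
      exact Real.sqrt_le_sqrt hh'1.le
    refine key' A B M' M m m' hM' hM hm hm' hA1 hA2 hB1 hB2 ν r r₁ _ hν0 hν1 hr hr₁ hc0 ?_
    intro x hx1 _
    have hsx : Real.sqrt h' ≤ Real.sqrt x := Real.sqrt_le_sqrt (by rw [hh']; exact hx1)
    exact Real.rpow_le_rpow (Kc_pos hsh').le (Kc_mono h1sh' hsx) hr₁0
  · -- m ≤ A ≤ m' < M' ≤ B ≤ M
    have hh'1 : 1 < h' := by rw [hh']; exact (one_lt_div hm').mpr hm'M'
    have h1sh' : 1 ≤ Real.sqrt h' := by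
      rw [show (1:ℝ) = Real.sqrt 1 by rw [Real.sqrt_one]]
      exact Real.sqrt_le_sqrt hh'1.le
    refine key' A B m m' M' M hm hm' hM' hM hA1 hA2 hB1 hB2 ν r r₁ _ hν0 hν1 hr hr₁ hc0 ?_
    intro x hx1 hx2
    have hx0 : 0 < x := lt_of_lt_of_le (by positivity) hx1
    have hsx0 : 0 < Real.sqrt x := Real.sqrt_pos.mpr hx0
    have h1 : Real.sqrt x ≤ (Real.sqrt h')⁻¹ := by
      have : x ≤ h'⁻¹ := by rw [hh', inv_div]; exact hx2
      calc Real.sqrt x ≤ Real.sqrt h'⁻¹ := Real.sqrt_le_sqrt this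
        _ = (Real.sqrt h')⁻¹ := Real.sqrt_inv h'
    have h2 : Real.sqrt h' ≤ (Real.sqrt x)⁻¹ := by
      rw [← one_div, le_div_iff₀ hsx0]
      rw [← one_div, le_div_iff₀ hsh'] at h1
      nlinarith
    have h3 : Kc (Real.sqrt h') ≤ Kc (Real.sqrt x) := by
      rw [← Kc_inv hsx0]
      exact Kc_mono h1sh' h2
    exact Real.rpow_le_rpow (Kc_pos hsh').le h3 hr₁0

end
end

section
/- Let 0 < m < M be reals and ν ∈ (0,1). Define λ₀ = (ν/(1−ν)) · (M^{1−ν} − m^{1−ν})/(m^{−ν} − M^{−ν}) and μ₀ = ν(M − m)/(M^ν − m^ν). Then for every t ∈ [m, M], ν t^{1−ν} + (1−ν) λ₀ t^{−ν} ≤ μ₀. -/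
open ContinuousLinearMap

noncomputable section

variable {H : Type*} [NormedAddCommGroup H] [InnerProductSpace ℂ H] [CompleteSpace H]

theorem stmt14 (m M ν lam₀ μ₀ t : ℝ) (hm : 0 < m) (hmM : m < M)
    (hν : ν ∈ Set.Ioo (0 : ℝ) 1)
    (hlam : lam₀ = ν / (1 - ν) * ((M ^ (1 - ν) - m ^ (1 - ν)) / (m ^ (-ν) - M ^ (-ν))))
    (hμ : μ₀ = ν * (M - m) / (M ^ ν - m ^ ν))
    (ht : t ∈ Set.Icc m M) :
    ν * t ^ (1 - ν) + (1 - ν) * lam₀ * t ^ (-ν) ≤ μ₀ := by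
  obtain ⟨hν0, hν1⟩ := hν
  obtain ⟨htm, htM⟩ := ht
  have hM : (0:ℝ) < M := hm.trans hmM
  have ht0 : (0:ℝ) < t := lt_of_lt_of_le hm htm
  have hMm : (0:ℝ) < M - m := by linarith
  have hmν : (0:ℝ) < m ^ ν := Real.rpow_pos_of_pos hm ν
  have hMν : (0:ℝ) < M ^ ν := Real.rpow_pos_of_pos hM ν
  have hlt : m ^ ν < M ^ ν := Real.rpow_lt_rpow hm.le hmM hν0
  set a : ℝ := (M - t) / (M - m) with ha_def
  set b : ℝ := (t - m) / (M - m) with hb_def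
  have ha : 0 ≤ a := div_nonneg (by linarith) hMm.le
  have hb : 0 ≤ b := div_nonneg (by linarith) hMm.le
  have hMm' : M - m ≠ 0 := hMm.ne'
  have hab : a + b = 1 := by
    rw [ha_def, hb_def, ← add_div, div_eq_one_iff_eq hMm']; ring
  have hcomb : a * m + b * M = t := by
    rw [ha_def, hb_def]; field_simp; ring
  -- concavity of x ^ ν
  have hconc := (Real.concaveOn_rpow hν0.le hν1.le).2 (Set.mem_Ici.2 hm.le)
    (Set.mem_Ici.2 hM.le) ha hb hab
  simp only [smul_eq_mul] at hconc
  rw [hcomb] at hconc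
  -- line equals μ₀ * (a * m^ν + b * M^ν)
  have hmν' : m ^ (-ν) = (m ^ ν)⁻¹ := Real.rpow_neg hm.le ν
  have hMν' : M ^ (-ν) = (M ^ ν)⁻¹ := Real.rpow_neg hM.le ν
  have hm1ν : m ^ (1 - ν) = m / m ^ ν := by
    rw [Real.rpow_sub hm, Real.rpow_one]
  have hM1ν : M ^ (1 - ν) = M / M ^ ν := by
    rw [Real.rpow_sub hM, Real.rpow_one]
  have hline : ν * t + (1 - ν) * lam₀ = μ₀ * (a * m ^ ν + b * M ^ ν) := by
    rw [hlam, hμ, hmν', hMν', hm1ν, hM1ν, ha_def, hb_def]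
    have h1 : (1:ℝ) - ν ≠ 0 := by linarith
    have h2 : M ^ ν - m ^ ν ≠ 0 := by linarith
    have h3 : (m ^ ν)⁻¹ - (M ^ ν)⁻¹ ≠ 0 := by
      have : (M ^ ν)⁻¹ < (m ^ ν)⁻¹ := by
        apply inv_strictAnti₀ hmν hlt
      linarith
    field_simp
    ring
  have hμpos : 0 < μ₀ := by
    rw [hμ]
    apply div_pos (by positivity) (by linarith)
  -- main inequality times t^ν
  have hmain : ν * t + (1 - ν) * lam₀ ≤ μ₀ * t ^ ν := by
    rw [hline]
    exact mul_le_mul_of_nonneg_left hconc hμpos.le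
  have htν : (0:ℝ) < t ^ (-ν) := Real.rpow_pos_of_pos ht0 _
  have key := mul_le_mul_of_nonneg_right hmain htν.le
  have h1 : t ^ (1 - ν) = t * t ^ (-ν) := by
    rw [show (1:ℝ) - ν = 1 + (-ν) by ring, Real.rpow_add ht0, Real.rpow_one]
  have h2 : t ^ ν * t ^ (-ν) = 1 := by
    rw [← Real.rpow_add ht0]; simp
  calc ν * t ^ (1 - ν) + (1 - ν) * lam₀ * t ^ (-ν)
      = (ν * t + (1 - ν) * lam₀) * t ^ (-ν) := by rw [h1]; ring
    _ ≤ μ₀ * t ^ ν * t ^ (-ν) := key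
    _ = μ₀ := by rw [mul_assoc, h2, mul_one]


end
end

section
/- Let A, B be positive invertible operators on a complex Hilbert space with 0 < m₁² ≤ A ≤ M₁² and 0 < m₂² ≤ B ≤ M₂² for positive reals m₁ ≤ M₁, m₂ ≤ M₂, and set m = (m₂/M₁)², M = (M₂/m₁)² with m < M. Let ν ∈ (0,1) and define λ₀ = (ν/(1−ν)) · (M^{1−ν} − m^{1−ν})/(m^{−ν} − M^{−ν}) and μ₀ = ν(M − m)/(M^ν − m^ν). Then for every positive unital linear map Φ on B(H), ν Φ(B) + (1−ν) λ₀ Φ(A) ≤ μ₀ Φ(A ♯_ν B). -/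
open ContinuousLinearMap

noncomputable section

variable {H : Type*} [NormedAddCommGroup H] [InnerProductSpace ℂ H] [CompleteSpace H]

private lemma scalar_key (m M ν t lam₀ μ₀ : ℝ) (hm0 : 0 < m) (hmM : m < M)
    (hν0 : 0 < ν) (hν1 : ν < 1)
    (hlam : lam₀ = ν / (1 - ν) * ((M ^ (1 - ν) - m ^ (1 - ν)) / (m ^ (-ν) - M ^ (-ν))))
    (hμ : μ₀ = ν * (M - m) / (M ^ ν - m ^ ν))
    (ht1 : m ≤ t) (ht2 : t ≤ M) :
    ν * t + (1 - ν) * lam₀ ≤ μ₀ * t ^ ν := by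
  have hM0 : 0 < M := hm0.trans hmM
  have ht0 : 0 < t := hm0.trans_le ht1
  have ha : 0 < m ^ ν := Real.rpow_pos_of_pos hm0 ν
  have hb : 0 < M ^ ν := Real.rpow_pos_of_pos hM0 ν
  have hab : m ^ ν < M ^ ν := Real.rpow_lt_rpow hm0.le hmM hν0
  have htν : 0 < t ^ ν := Real.rpow_pos_of_pos ht0 ν
  have hkey : (1 - ν) * lam₀ = μ₀ * m ^ ν - ν * m := by
    rw [hlam, hμ, Real.rpow_sub hM0, Real.rpow_sub hm0, Real.rpow_one, Real.rpow_one,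
        Real.rpow_neg hM0.le, Real.rpow_neg hm0.le]
    have h1 : (1:ℝ) - ν ≠ 0 := by linarith
    have h2 : M ^ ν - m ^ ν ≠ 0 := by linarith
    have h3 : (m ^ ν)⁻¹ - (M ^ ν)⁻¹ ≠ 0 := by
      have : (M ^ ν)⁻¹ < (m ^ ν)⁻¹ := inv_strictAnti₀ ha hab
      linarith
    field_simp
    ring
  have hMm : (0:ℝ) < M - m := by linarith
  have hwa : (0:ℝ) ≤ (M - t)/(M - m) := div_nonneg (by linarith) (by linarith)
  have hwb : (0:ℝ) ≤ (t - m)/(M - m) := div_nonneg (by linarith) (by linarith)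
  have hwab : (M - t)/(M - m) + (t - m)/(M - m) = 1 := by field_simp; ring
  have hconc := (Real.concaveOn_rpow hν0.le hν1.le).2 (Set.mem_Ici.mpr hm0.le)
      (Set.mem_Ici.mpr hM0.le) hwa hwb hwab
  have heq : ((M - t)/(M - m)) * m + ((t - m)/(M - m)) * M = t := by field_simp; ring
  rw [smul_eq_mul, smul_eq_mul, smul_eq_mul, smul_eq_mul, heq] at hconc
  rw [div_mul_eq_mul_div, div_mul_eq_mul_div, ← add_div, div_le_iff₀ hMm] at hconc
  have hchord : (M - t) * m ^ ν + (t - m) * M ^ ν ≤ (M - m) * t ^ ν := by linarith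
  rw [hkey]
  have hstep : ν * (t - m) ≤ μ₀ * (t ^ ν - m ^ ν) := by
    rw [hμ, div_mul_eq_mul_div, le_div_iff₀ (by linarith)]
    nlinarith [hchord]
  nlinarith [hstep]

set_option maxHeartbeats 2000000 in
set_option synthInstance.maxHeartbeats 1000000 in
theorem stmt15 (A B : H →L[ℂ] H) (m₁ M₁ m₂ M₂ m M ν lam₀ μ₀ : ℝ)
    (hm₁ : 0 < m₁) (hm₂ : 0 < m₂) (h₁ : m₁ ≤ M₁) (h₂ : m₂ ≤ M₂)
    (hA₁ : m₁ ^ 2 • (1 : H →L[ℂ] H) ≤ A) (hA₂ : A ≤ M₁ ^ 2 • (1 : H →L[ℂ] H))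
    (hB₁ : m₂ ^ 2 • (1 : H →L[ℂ] H) ≤ B) (hB₂ : B ≤ M₂ ^ 2 • (1 : H →L[ℂ] H))
    (hm : m = (m₂ / M₁) ^ 2) (hM : M = (M₂ / m₁) ^ 2) (hmM : m < M)
    (hν : ν ∈ Set.Ioo (0 : ℝ) 1)
    (hlam : lam₀ = ν / (1 - ν) * ((M ^ (1 - ν) - m ^ (1 - ν)) / (m ^ (-ν) - M ^ (-ν))))
    (hμ : μ₀ = ν * (M - m) / (M ^ ν - m ^ ν))
    (Φ : (H →L[ℂ] H) →ₗ[ℂ] (H →L[ℂ] H)) (hΦ1 : Φ 1 = 1)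
    (hΦpos : ∀ X : H →L[ℂ] H, 0 ≤ X → 0 ≤ Φ X) :
    ν • Φ B + ((1 - ν) * lam₀) • Φ A ≤ μ₀ • Φ (gmean ν A B) := by
  obtain ⟨hν0, hν1⟩ := hν
  have hM₁ : 0 < M₁ := hm₁.trans_le h₁
  have hM₂ : 0 < M₂ := hm₂.trans_le h₂
  have hm0 : 0 < m := by rw [hm]; positivity
  have hM0 : 0 < M := hm0.trans hmM
  have hone : (0:H →L[ℂ] H) ≤ m₁ ^ 2 • (1 : H →L[ℂ] H) :=
    smul_nonneg (by positivity) zero_le_one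
  have hA0 : (0:H →L[ℂ] H) ≤ A := hone.trans hA₁
  have hAsa : IsSelfAdjoint A := .of_nonneg hA0
  have hA₁' : algebraMap ℝ (H →L[ℂ] H) (m₁ ^ 2) ≤ A := by
    rwa [Algebra.algebraMap_eq_smul_one]
  have hA_spec : ∀ x ∈ spectrum ℝ A, m₁ ^ 2 ≤ x :=
    (algebraMap_le_iff_le_spectrum (a := A)).mp hA₁'
  have h0A : (0:ℝ) ∉ spectrum ℝ A := fun h0 => by nlinarith [hA_spec 0 h0]
  have hAunit : IsUnit A := by
    by_contra h
    exact h0A ((spectrum.zero_mem_iff ℝ).mpr (by simpa using h))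
  have hA0' : (0:NNReal) ∉ spectrum NNReal A := spectrum.zero_notMem NNReal hAunit
  set S : H →L[ℂ] H := A ^ ((1:ℝ)/2) with hS
  set C : H →L[ℂ] H := A ^ (-((1:ℝ)/2)) with hC
  have hS0 : (0:H →L[ℂ] H) ≤ S := CFC.rpow_nonneg
  have hC0 : (0:H →L[ℂ] H) ≤ C := CFC.rpow_nonneg
  have hSsa : IsSelfAdjoint S := .of_nonneg hS0
  have hCsa : IsSelfAdjoint C := .of_nonneg hC0
  have hCS : C * S = 1 := CFC.rpow_neg_mul_rpow _ (hAunit.isStrictlyPositive hA0)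
  have hSC : S * C = 1 := CFC.rpow_mul_rpow_neg _ (hAunit.isStrictlyPositive hA0)
  have hSS : S * S = A := by
    rw [hS, ← CFC.rpow_add hAunit]
    norm_num [CFC.rpow_one A]
  have hCAC : C * A * C = 1 := by
    rw [← hSS, show C * (S * S) * C = (C * S) * (S * C) by noncomm_ring, hCS, hSC, one_mul]
  set X : H →L[ℂ] H := C * B * C with hX
  have hconj : ∀ U V : H →L[ℂ] H, U ≤ V → C * U * C ≤ C * V * C := fun U V h => by
    simpa [hCsa.star_eq] using star_left_conjugate_le_conjugate h C
  have hconjS : ∀ U V : H →L[ℂ] H, U ≤ V → S * U * S ≤ S * V * S := fun U V h => by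
    simpa [hSsa.star_eq] using star_left_conjugate_le_conjugate h S
  have hsmul : ∀ r : ℝ, C * (r • (1:H →L[ℂ] H)) * C = r • (C * C) := fun r => by
    simp [mul_smul_comm, smul_mul_assoc]
  have hCC_u : C * C ≤ (m₁ ^ 2)⁻¹ • (1:H →L[ℂ] H) := by
    have h := hconj _ _ hA₁
    rw [hsmul, hCAC] at h
    have h2 := smul_le_smul_of_nonneg_left h (le_of_lt (by positivity : (0:ℝ) < (m₁ ^ 2)⁻¹))
    rwa [smul_smul, inv_mul_cancel₀ (by positivity), one_smul] at h2
  have hCC_l : (M₁ ^ 2)⁻¹ • (1:H →L[ℂ] H) ≤ C * C := by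
    have h := hconj _ _ hA₂
    rw [hsmul, hCAC] at h
    have h2 := smul_le_smul_of_nonneg_left h (le_of_lt (by positivity : (0:ℝ) < (M₁ ^ 2)⁻¹))
    rwa [smul_smul, inv_mul_cancel₀ (by positivity), one_smul] at h2
  have hX_l : m • (1:H →L[ℂ] H) ≤ X := by
    have h := hconj _ _ hB₁
    rw [hsmul] at h
    refine le_trans ?_ h
    have h2 := smul_le_smul_of_nonneg_left hCC_l (le_of_lt (by positivity : (0:ℝ) < m₂ ^ 2))
    rw [smul_smul] at h2
    refine le_trans (le_of_eq ?_) h2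
    rw [hm, div_pow, div_eq_mul_inv]
  have hX_u : X ≤ M • (1:H →L[ℂ] H) := by
    have h := hconj _ _ hB₂
    rw [hsmul] at h
    refine h.trans ?_
    have h2 := smul_le_smul_of_nonneg_left hCC_u (le_of_lt (by positivity : (0:ℝ) < M₂ ^ 2))
    rw [smul_smul] at h2
    refine h2.trans (le_of_eq ?_)
    rw [hM, div_pow, div_eq_mul_inv]
  have hX0 : (0:H →L[ℂ] H) ≤ X :=
    le_trans (smul_nonneg hm0.le zero_le_one) hX_l
  have hXsa : IsSelfAdjoint X := .of_nonneg hX0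
  have hspec_l : ∀ x ∈ spectrum ℝ X, m ≤ x :=
    (algebraMap_le_iff_le_spectrum (a := X)).mp (by rwa [Algebra.algebraMap_eq_smul_one])
  have hspec_u : ∀ x ∈ spectrum ℝ X, x ≤ M :=
    (le_algebraMap_iff_spectrum_le (a := X)).mp (by rwa [Algebra.algebraMap_eq_smul_one])
  have hXν : X ^ ν = cfc (fun x : ℝ => x ^ ν) X := by
    rw [CFC.rpow_def, cfc_nnreal_eq_real _ _ hX0]
    refine cfc_congr fun x hx => ?_
    have hx0 : 0 < x := lt_of_lt_of_le hm0 (hspec_l x hx)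
    simp [NNReal.coe_rpow, Real.coe_toNNReal x hx0.le]
  have hcont : ContinuousOn (fun x : ℝ => x ^ ν) (spectrum ℝ X) := fun x hx =>
    (Real.continuousAt_rpow_const x ν
      (Or.inl (ne_of_gt (lt_of_lt_of_le hm0 (hspec_l x hx))))).continuousWithinAt
  have e1 : cfc (fun x : ℝ => ν * x + (1 - ν) * lam₀) X
      = ν • X + ((1 - ν) * lam₀) • (1:H →L[ℂ] H) := by
    rw [cfc_add_const ((1 - ν) * lam₀) (fun x : ℝ => ν * x) X (by fun_prop),
      Algebra.algebraMap_eq_smul_one]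
    congr 1
    have := cfc_smul_id (R := ℝ) ν X
    simpa [smul_eq_mul] using this
  have e2 : cfc (fun x : ℝ => μ₀ • x ^ ν) X = μ₀ • X ^ ν := by
    rw [cfc_smul μ₀ (fun x : ℝ => x ^ ν) X hcont, hXν]
  have hcfc : ν • X + ((1 - ν) * lam₀) • (1:H →L[ℂ] H) ≤ μ₀ • X ^ ν := by
    rw [← e1, ← e2]
    refine cfc_mono (fun x hx => ?_) (by fun_prop) (by fun_prop)
    rw [smul_eq_mul]
    exact scalar_key m M ν x lam₀ μ₀ hm0 hmM hν0 hν1 hlam hμ (hspec_l x hx) (hspec_u x hx)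
  have hSXS : S * X * S = B := by
    rw [hX, show S * (C * B * C) * S = (S * C) * B * (C * S) by noncomm_ring, hSC, hCS,
      one_mul, mul_one]
  have eL : S * (ν • X + ((1 - ν) * lam₀) • (1:H →L[ℂ] H)) * S
      = ν • B + ((1 - ν) * lam₀) • A := by
    rw [mul_add, add_mul, mul_smul_comm, mul_smul_comm, smul_mul_assoc, smul_mul_assoc,
      hSXS, mul_one, hSS]
  have eR : S * (μ₀ • X ^ ν) * S = μ₀ • gmean ν A B := by
    rw [mul_smul_comm, smul_mul_assoc]
    rfl
  have hop : ν • B + ((1 - ν) * lam₀) • A ≤ μ₀ • gmean ν A B := by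
    rw [← eL, ← eR]
    exact hconjS _ _ hcfc
  have hsub := hΦpos _ (sub_nonneg.mpr hop)
  rw [map_sub] at hsub
  have hfin := sub_nonneg.mp hsub
  rwa [map_add, Φ.map_smul_of_tower, Φ.map_smul_of_tower, Φ.map_smul_of_tower] at hfin

end
end
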